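/- Let 𝒳 = (X, d_X, μ) and 𝒴 = (Y, d_Y, ν) be compact metric measure spaces, n ≥ 2, p ≥ 1, with q the Hölder conjugate of p, and let σ be any probability distribution on the dual unit set Θ_{n,p}. Then SDMW_{n,p}(𝒳, 𝒴) ≤ DMW_{n,p}(𝒳, 𝒴) ≤ GW_p(𝒳, 𝒴). -/

import Mathlib

open MeasureTheory Filter
open scoped ENNReal NNReal

noncomputable section

/-- The set of couplings of two measures: probability measures on the product
whose marginals are the two given measures. -/
def couplings {X Y : Type*} [MeasurableSpace X] [MeasurableSpace Y]
    (μ : Measure X) (ν : Measure Y) : Set (Measure (X × Y)) :=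
  {π | π.map Prod.fst = μ ∧ π.map Prod.snd = ν}

/-- The `p`-Wasserstein distance associated with a cost/distance function `d` on `Z`:
`W_p(α,β) = (inf_{γ ∈ Π(α,β)} ∫ d(z,z')^p dγ)^{1/p}`. -/
def Wp {Z : Type*} [MeasurableSpace Z] (p : ℝ) (d : Z → Z → ℝ)
    (α β : Measure Z) : ℝ :=
  sInf {c : ℝ | ∃ π ∈ couplings α β, c = ∫ z, d z.1 z.2 ^ p ∂π} ^ (1 / p)

/-- The Gromov–Wasserstein distance between `(X, dX, μ)` and `(Y, dY, ν)`:
`GW_p = (inf_{π ∈ Π(μ,ν)} ∬ |dX(x,x') - dY(y,y')|^p dπ dπ)^{1/p}`. -/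
def GW {X Y : Type*} [MeasurableSpace X] [MeasurableSpace Y]
    (p : ℝ) (dX : X → X → ℝ) (dY : Y → Y → ℝ)
    (μ : Measure X) (ν : Measure Y) : ℝ :=
  sInf {c : ℝ | ∃ π ∈ couplings μ ν,
      c = ∫ w, |dX w.1.1 w.2.1 - dY w.1.2 w.2.2| ^ p ∂(π.prod π)} ^ (1 / p)

/-- The index set of unordered pairs `i < j` of `Fin n`; it has `n.choose 2` elements. -/
abbrev PairIdx (n : ℕ) := {ij : Fin n × Fin n // ij.1 < ij.2}

/-- The order-`n` distance-matrix map `T_X^{(n)}`. -/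
def dmMap {X : Type*} (n : ℕ) (dX : X → X → ℝ) (x : Fin n → X) : PairIdx n → ℝ :=
  fun ij => dX (x ij.1.1) (x ij.1.2)

/-- The order-`n` distance-matrix law `ρ_X^{(n)} = (T_X^{(n)})_# μ^{⊗n}`. -/
def dmLaw {X : Type*} [MeasurableSpace X] (n : ℕ) (dX : X → X → ℝ) (μ : Measure X) :
    Measure (PairIdx n → ℝ) :=
  (Measure.pi fun _ : Fin n => μ).map (dmMap n dX)

/-- The normalized averaged `ℓ^p` metric `‖a-b‖_{p,avg}` on distance matrices. -/
def avgDist (n : ℕ) (p : ℝ) (a b : PairIdx n → ℝ) : ℝ :=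
  ((n.choose 2 : ℝ)⁻¹ * ∑ ij : PairIdx n, |a ij - b ij| ^ p) ^ (1 / p)

/-- The order-`n` Distance-Matrix Wasserstein statistic
`DMW_{n,p}(𝒳,𝒴) = W_p(ρ_X^{(n)}, ρ_Y^{(n)})` for the metric `‖·‖_{p,avg}`. -/
def DMW {X Y : Type*} [MeasurableSpace X] [MeasurableSpace Y]
    (n : ℕ) (p : ℝ) (dX : X → X → ℝ) (dY : Y → Y → ℝ)
    (μ : Measure X) (ν : Measure Y) : ℝ :=
  Wp p (avgDist n p) (dmLaw n dX μ) (dmLaw n dY ν)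

/-- The empirical measure `(1/n) Σ_{i} δ_{x i}` of an `n`-tuple of points. -/
def empMeas {Z : Type*} [MeasurableSpace Z] (n : ℕ) (x : Fin n → Z) : Measure Z :=
  (n : ℝ≥0∞)⁻¹ • ∑ i : Fin n, Measure.dirac (x i)

/-- The expected empirical Wasserstein approximation error `𝔼 W_p(μ, μ̂_n)`,
where the expectation is over `n` i.i.d. samples from `μ`. -/
def expEmpWp {X : Type*} [MeasurableSpace X] (p : ℝ) (d : X → X → ℝ)
    (μ : Measure X) (n : ℕ) : ℝ :=
  ∫ x, Wp p d μ (empMeas n x) ∂(Measure.pi fun _ : Fin n => μ)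

/-- The dual norm `‖θ‖_{q,dual} = N_n^{1/p} ‖θ‖_q`, with `q` the Hölder conjugate
of `p` (`q = ∞` when `p = 1`). -/
def dualNorm (n : ℕ) (p : ℝ) (θ : PairIdx n → ℝ) : ℝ :=
  if p = 1 then (n.choose 2 : ℝ) * ⨆ ij : PairIdx n, |θ ij|
  else (n.choose 2 : ℝ) ^ (1 / p) *
    (∑ ij : PairIdx n, |θ ij| ^ (p / (p - 1))) ^ ((p - 1) / p)

/-- The linear projection `P_θ(a) = ⟨θ, a⟩` on distance matrices. -/
def proj (n : ℕ) (θ : PairIdx n → ℝ) (a : PairIdx n → ℝ) : ℝ :=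
  ∑ ij : PairIdx n, θ ij * a ij

/-- The sliced Distance-Matrix Wasserstein statistic
`SDMW_{n,p}(𝒳,𝒴) = (𝔼_{θ∼σ} W_p^p((P_θ)_# ρ_X^{(n)}, (P_θ)_# ρ_Y^{(n)}))^{1/p}`. -/
def SDMW {X Y : Type*} [MeasurableSpace X] [MeasurableSpace Y]
    (n : ℕ) (p : ℝ) (σ : Measure (PairIdx n → ℝ))
    (dX : X → X → ℝ) (dY : Y → Y → ℝ) (μ : Measure X) (ν : Measure Y) : ℝ :=
  (∫ θ, Wp p (fun s t : ℝ => |s - t|)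
      ((dmLaw n dX μ).map (proj n θ)) ((dmLaw n dY ν).map (proj n θ)) ^ p ∂σ) ^ (1 / p)

/-- The support of a measure with respect to an explicit distance function. -/
def suppOf {X : Type*} [MeasurableSpace X] (d : X → X → ℝ) (μ : Measure X) : Set X :=
  {x | ∀ ε : ℝ, 0 < ε → 0 < μ {y | d x y < ε}}

/-- Two metric measure spaces are measure-preserving isometric: there is a surjective
isometry between the supports pushing the first measure to the second. -/
def MPIsoD {X Y : Type*} [MeasurableSpace X] [MeasurableSpace Y]
    (dX : X → X → ℝ) (dY : Y → Y → ℝ) (μ : Measure X) (ν : Measure Y) : Prop :=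
  ∃ φ : suppOf dX μ → suppOf dY ν,
    Function.Surjective φ ∧
    (∀ a b : suppOf dX μ, dY (φ a).1 (φ b).1 = dX a.1 b.1) ∧
    (μ.comap (Subtype.val : suppOf dX μ → X)).map φ =
      ν.comap (Subtype.val : suppOf dY ν → Y)


/-!
Both inequalities come from pushing couplings forward. Sampling `n` i.i.d. pairs from a coupling
`π` of `μ` and `ν` gives a coupling of the two distance-matrix laws; every entry pair `(i, j)` of
it has the law of the Gromov–Wasserstein integrand under `π ⊗ π`, so its `avgDist ^ p` cost is
the Gromov–Wasserstein cost of `π`. For the sliced bound, a coupling of the distance-matrix laws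
pushes forward under `P_θ` to a coupling of the sliced laws, and by Hölder's inequality `P_θ` is
`1`-Lipschitz from `‖·‖_{p,avg}` to `ℝ` when `‖θ‖_{q,dual} ≤ 1`; so every slice costs at most
`DMW ^ p`, and averaging over `σ` gives `SDMW ≤ DMW`. Compactness bounds the distances, which
makes all the costs integrable.
-/

section Couplings

variable {Z W Z' W' : Type*} [MeasurableSpace Z] [MeasurableSpace W]
  [MeasurableSpace Z'] [MeasurableSpace W'] {α : Measure Z} {β : Measure W}
  {π : Measure (Z × W)}

lemma isProbabilityMeasure_of_mem_couplings [IsProbabilityMeasure α] (hπ : π ∈ couplings α β) :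
    IsProbabilityMeasure π :=
  ⟨by rw [← Set.preimage_univ (f := Prod.fst), ← Measure.map_apply measurable_fst .univ,
    hπ.1, measure_univ]⟩

lemma prod_mem_couplings [IsProbabilityMeasure α] [IsProbabilityMeasure β] :
    α.prod β ∈ couplings α β := by
  simp [couplings]

lemma map_prodMap_mem_couplings {f : Z → Z'} {g : W → W'} (hf : Measurable f)
    (hg : Measurable g) (hπ : π ∈ couplings α β) :
    π.map (Prod.map f g) ∈ couplings (α.map f) (β.map g) := by
  constructor
  · rw [Measure.map_map measurable_fst (hf.prodMap hg), ← hπ.1,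
      Measure.map_map hf measurable_fst]
    rfl
  · rw [Measure.map_map measurable_snd (hf.prodMap hg), ← hπ.2,
      Measure.map_map hg measurable_snd]
    rfl

lemma integrable_of_mem_couplings [IsProbabilityMeasure α] (hπ : π ∈ couplings α β)
    {K : Set Z} {L : Set W} (hK : ∀ᵐ z ∂α, z ∈ K) (hL : ∀ᵐ w ∂β, w ∈ L) {c : Z × W → ℝ}
    (hc : AEStronglyMeasurable c π) {C : ℝ} (hC : ∀ u ∈ K ×ˢ L, ‖c u‖ ≤ C) :
    Integrable c π := by
  have := isProbabilityMeasure_of_mem_couplings hπ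
  rw [← hπ.1] at hK
  rw [← hπ.2] at hL
  refine .of_bound hc C ?_
  filter_upwards [ae_of_ae_map measurable_fst.aemeasurable hK,
    ae_of_ae_map measurable_snd.aemeasurable hL] with u hu₁ hu₂
  exact hC u ⟨hu₁, hu₂⟩

end Couplings

section TransportCost

variable {Z Z' : Type*} [MeasurableSpace Z] [MeasurableSpace Z']

def transportCost (p : ℝ) (d : Z → Z → ℝ) (α β : Measure Z) : ℝ :=
  sInf {c : ℝ | ∃ π ∈ couplings α β, c = ∫ z, d z.1 z.2 ^ p ∂π}

variable {p : ℝ} {d : Z → Z → ℝ} {α β : Measure Z}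

lemma Wp_eq_transportCost_rpow : Wp p d α β = transportCost p d α β ^ (1 / p) := rfl

lemma transportCost_nonneg (hd : ∀ z z', 0 ≤ d z z') : 0 ≤ transportCost p d α β :=
  Real.sInf_nonneg <| by
    rintro _ ⟨π, -, rfl⟩
    exact integral_nonneg fun z => Real.rpow_nonneg (hd _ _) p

lemma transportCost_le_integral (hd : ∀ z z', 0 ≤ d z z') {π : Measure (Z × Z)}
    (hπ : π ∈ couplings α β) : transportCost p d α β ≤ ∫ z, d z.1 z.2 ^ p ∂π :=
  csInf_le ⟨0, by rintro _ ⟨π, -, rfl⟩; exact integral_nonneg fun z => Real.rpow_nonneg (hd _ _) p⟩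
    ⟨π, hπ, rfl⟩

lemma Wp_rpow (hd : ∀ z z', 0 ≤ d z z') (hp : 0 < p) : Wp p d α β ^ p = transportCost p d α β := by
  rw [Wp_eq_transportCost_rpow, ← Real.rpow_mul (transportCost_nonneg hd), one_div,
    inv_mul_cancel₀ hp.ne', Real.rpow_one]

lemma transportCost_map_le {d' : Z' → Z' → ℝ} {f : Z → Z'} (hf : Measurable f)
    (hd' : ∀ z z', 0 ≤ d' z z') (hd'm : Measurable (Function.uncurry d')) (hp : 0 ≤ p)
    (hcontr : ∀ z z', d' (f z) (f z') ≤ d z z') (hne : (couplings α β).Nonempty)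
    (hint : ∀ π ∈ couplings α β, Integrable (fun z => d z.1 z.2 ^ p) π) :
    transportCost p d' (α.map f) (β.map f) ≤ transportCost p d α β := by
  obtain ⟨π₀, hπ₀⟩ := hne
  refine le_csInf ⟨_, π₀, hπ₀, rfl⟩ ?_
  rintro _ ⟨π, hπ, rfl⟩
  calc transportCost p d' (α.map f) (β.map f)
      ≤ ∫ z, d' z.1 z.2 ^ p ∂(π.map (Prod.map f f)) :=
        transportCost_le_integral hd' (map_prodMap_mem_couplings hf hf hπ)
    _ = ∫ z, d' (f z.1) (f z.2) ^ p ∂π :=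
        integral_map (hf.prodMap hf).aemeasurable
          (hd'm.pow_const p).aestronglyMeasurable
    _ ≤ ∫ z, d z.1 z.2 ^ p ∂π :=
        integral_mono_of_nonneg (.of_forall fun z => Real.rpow_nonneg (hd' _ _) p) (hint π hπ)
          (.of_forall fun z => Real.rpow_le_rpow (hd' _ _) (hcontr _ _) hp)

end TransportCost

section DistanceMatrices

lemma card_pairIdx (n : ℕ) : Fintype.card (PairIdx n) = n.choose 2 := by
  rw [Fintype.card_subtype, Fintype.card_product_filter_lt, Fintype.card_fin]

variable {n : ℕ} {p : ℝ}

lemma cast_choose_two_pos (hn : 2 ≤ n) : (0 : ℝ) < n.choose 2 := by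
  exact_mod_cast Nat.choose_pos hn

lemma avgDist_nonneg (a b : PairIdx n → ℝ) : 0 ≤ avgDist n p a b :=
  Real.rpow_nonneg (by positivity) _

lemma avgDist_rpow (hp : p ≠ 0) (a b : PairIdx n → ℝ) :
    avgDist n p a b ^ p = (n.choose 2 : ℝ)⁻¹ * ∑ ij, |a ij - b ij| ^ p := by
  rw [avgDist, ← Real.rpow_mul (by positivity), one_div, inv_mul_cancel₀ hp, Real.rpow_one]

lemma continuous_avgDist (hp : 0 < p) :
    Continuous fun z : (PairIdx n → ℝ) × (PairIdx n → ℝ) => avgDist n p z.1 z.2 := by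
  refine .rpow_const ?_ fun _ => .inr (by positivity)
  refine continuous_const.mul (continuous_finsetSum _ fun ij _ => ?_)
  exact ((continuous_apply ij).comp continuous_fst |>.sub
    ((continuous_apply ij).comp continuous_snd)).abs.rpow_const fun _ => .inr hp.le

lemma abs_proj_sub_proj_le (θ a b : PairIdx n → ℝ) :
    |proj n θ a - proj n θ b| ≤ ∑ ij, |θ ij| * |a ij - b ij| := by
  have : proj n θ a - proj n θ b = ∑ ij, θ ij * (a ij - b ij) := by
    simp only [proj, mul_sub, Finset.sum_sub_distrib]
  rw [this]
  exact (Finset.abs_sum_le_sum_abs _ _).trans_eq (by simp only [abs_mul])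

/-- The normalizations `N^{1/p}` of `dualNorm` and `N^{-1/p}` of `avgDist` cancel, leaving Hölder's
inequality (in its `ℓ^∞`–`ℓ^1` form when `p = 1`). -/
lemma abs_proj_sub_proj_le_dualNorm_mul_avgDist (hn : 2 ≤ n) (hp : 1 ≤ p)
    (θ a b : PairIdx n → ℝ) :
    |proj n θ a - proj n θ b| ≤ dualNorm n p θ * avgDist n p a b := by
  have hN := cast_choose_two_pos hn
  refine (abs_proj_sub_proj_le θ a b).trans ?_
  rcases hp.eq_or_lt with rfl | hp
  · have hθ : ∀ ij, |θ ij| ≤ ⨆ ij, |θ ij| := le_ciSup (Finite.bddAbove_range _)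
    simp only [dualNorm, if_pos, avgDist, div_one, Real.rpow_one]
    rw [mul_mul_mul_comm, mul_inv_cancel₀ hN.ne', one_mul, Finset.mul_sum]
    exact Finset.sum_le_sum fun ij _ => mul_le_mul_of_nonneg_right (hθ ij) (abs_nonneg _)
  · have hq : (1 / (p / (p - 1))) = (p - 1) / p := one_div_div _ _
    have holder := Real.inner_le_Lp_mul_Lq Finset.univ (fun ij => |θ ij|)
      (fun ij => |a ij - b ij|) (Real.HolderConjugate.conjExponent hp).symm
    simp only [abs_abs, Real.conjExponent, hq] at holder
    rw [dualNorm, if_neg hp.ne', avgDist, Real.mul_rpow (by positivity) (by positivity),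
      Real.inv_rpow hN.le, mul_mul_mul_comm, mul_inv_cancel₀ (by positivity), one_mul]
    exact holder

end DistanceMatrices

section ProductCouplings

variable {ι Z W : Type*} [MeasurableSpace Z] [MeasurableSpace W]

lemma measurable_unzip :
    Measurable fun w : ι → Z × W => (fun k => (w k).1, fun k => (w k).2) :=
  (measurable_pi_lambda _ fun k => (measurable_pi_apply k).fst).prodMk
    (measurable_pi_lambda _ fun k => (measurable_pi_apply k).snd)

variable [Fintype ι]

lemma map_eval_pair_pi (π : Measure Z) [IsProbabilityMeasure π] {i j : ι} (hij : i ≠ j) :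
    (Measure.pi fun _ : ι => π).map (fun w => (w i, w j)) = π.prod π := by
  have hind := (ProbabilityTheory.iIndepFun_pi (μ := fun _ : ι => π) (X := fun _ => id)
    fun _ => aemeasurable_id).indepFun hij
  rw [(ProbabilityTheory.indepFun_iff_map_prod_eq_prod_map_map (measurable_pi_apply i).aemeasurable
    (measurable_pi_apply j).aemeasurable).1 hind, (measurePreserving_eval _ i).map_eq,
    (measurePreserving_eval _ j).map_eq]

lemma map_unzip_pi_mem_couplings {μ : Measure Z} {ν : Measure W} [IsProbabilityMeasure μ]
    [IsProbabilityMeasure ν] {π : Measure (Z × W)} (hπ : π ∈ couplings μ ν) :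
    (Measure.pi fun _ : ι => π).map (fun w => (fun k => (w k).1, fun k => (w k).2)) ∈
      couplings (Measure.pi fun _ : ι => μ) (Measure.pi fun _ : ι => ν) := by
  have := isProbabilityMeasure_of_mem_couplings hπ
  constructor
  · rw [Measure.map_map measurable_fst measurable_unzip, ← hπ.1]
    exact Measure.pi_map_pi fun _ => measurable_fst.aemeasurable
  · rw [Measure.map_map measurable_snd measurable_unzip, ← hπ.2]
    exact Measure.pi_map_pi fun _ => measurable_snd.aemeasurable

end ProductCouplings

section DistanceMatrixLaws

variable {X Y : Type*} [MeasurableSpace X] [MeasurableSpace Y]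

def gwCost (p : ℝ) (dX : X → X → ℝ) (dY : Y → Y → ℝ) (μ : Measure X) (ν : Measure Y) : ℝ :=
  sInf {c : ℝ | ∃ π ∈ couplings μ ν,
      c = ∫ w, |dX w.1.1 w.2.1 - dY w.1.2 w.2.2| ^ p ∂(π.prod π)}

def dmCoupling (n : ℕ) (dX : X → X → ℝ) (dY : Y → Y → ℝ) (π : Measure (X × Y)) :
    Measure ((PairIdx n → ℝ) × (PairIdx n → ℝ)) :=
  (Measure.pi fun _ : Fin n => π).map
    fun w => (dmMap n dX fun k => (w k).1, dmMap n dY fun k => (w k).2)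

variable {n : ℕ} {p : ℝ} {dX : X → X → ℝ} {dY : Y → Y → ℝ} {μ : Measure X} {ν : Measure Y}

lemma measurable_dmMap (hdX : Measurable (Function.uncurry dX)) : Measurable (dmMap n dX) :=
  measurable_pi_lambda _ fun ij =>
    hdX.comp (f := fun x : Fin n → X => (x ij.1.1, x ij.1.2))
      ((measurable_pi_apply _).prodMk (measurable_pi_apply _))

lemma isProbabilityMeasure_dmLaw [IsProbabilityMeasure μ] (hdX : Measurable (Function.uncurry dX)) :
    IsProbabilityMeasure (dmLaw n dX μ) :=
  Measure.isProbabilityMeasure_map (measurable_dmMap hdX).aemeasurable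

lemma ae_dmLaw_mem_pi (hdX : Measurable (Function.uncurry dX)) {S : Set ℝ} (hS : MeasurableSet S)
    (hdXS : ∀ x x', dX x x' ∈ S) : ∀ᵐ a ∂dmLaw n dX μ, a ∈ Set.univ.pi fun _ => S :=
  (ae_map_iff (measurable_dmMap hdX).aemeasurable (.univ_pi fun _ => hS)).2
    (ae_of_all _ fun _ _ _ => hdXS _ _)

/-- Distance matrices of a space with bounded distances live in a compact box, on which the
continuous cost `avgDist ^ p` is bounded. -/
lemma integrable_avgDist_rpow_of_mem_couplings [IsProbabilityMeasure μ] (hp : 0 < p)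
    (hdX : Measurable (Function.uncurry dX)) (hdY : Measurable (Function.uncurry dY))
    {CX CY : ℝ} (hX : ∀ x x', |dX x x'| ≤ CX)
    (hY : ∀ y y', |dY y y'| ≤ CY) {γ : Measure ((PairIdx n → ℝ) × (PairIdx n → ℝ))}
    (hγ : γ ∈ couplings (dmLaw n dX μ) (dmLaw n dY ν)) :
    Integrable (fun z => avgDist n p z.1 z.2 ^ p) γ := by
  have := isProbabilityMeasure_dmLaw (n := n) (μ := μ) hdX
  have hcont : Continuous fun z : (PairIdx n → ℝ) × (PairIdx n → ℝ) => avgDist n p z.1 z.2 ^ p :=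
    (continuous_avgDist hp).rpow_const fun _ => .inr hp.le
  obtain ⟨C, hC⟩ := ((isCompact_univ_pi fun _ => isCompact_Icc (a := -CX) (b := CX)).prod
    (isCompact_univ_pi fun _ => isCompact_Icc (a := -CY) (b := CY))).exists_bound_of_continuousOn
    hcont.continuousOn
  exact integrable_of_mem_couplings hγ
    (ae_dmLaw_mem_pi hdX measurableSet_Icc fun x x' => abs_le.1 (hX x x'))
    (ae_dmLaw_mem_pi hdY measurableSet_Icc fun y y' => abs_le.1 (hY y y'))
    hcont.aestronglyMeasurable hC

lemma GW_eq_gwCost_rpow : GW p dX dY μ ν = gwCost p dX dY μ ν ^ (1 / p) := rfl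

lemma dmCoupling_mem_couplings [IsProbabilityMeasure μ] [IsProbabilityMeasure ν]
    (hdX : Measurable (Function.uncurry dX)) (hdY : Measurable (Function.uncurry dY))
    {π : Measure (X × Y)} (hπ : π ∈ couplings μ ν) :
    dmCoupling n dX dY π ∈ couplings (dmLaw n dX μ) (dmLaw n dY ν) := by
  have h := map_prodMap_mem_couplings (measurable_dmMap hdX) (measurable_dmMap hdY)
    (map_unzip_pi_mem_couplings (ι := Fin n) hπ)
  rwa [Measure.map_map ((measurable_dmMap hdX).prodMap (measurable_dmMap hdY))
    measurable_unzip] at h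

lemma integral_avgDist_rpow_dmCoupling (hn : 2 ≤ n) (hp : 0 < p)
    (hdX : Measurable (Function.uncurry dX)) (hdY : Measurable (Function.uncurry dY))
    {π : Measure (X × Y)} [IsProbabilityMeasure π]
    (hint : Integrable (fun w => |dX w.1.1 w.2.1 - dY w.1.2 w.2.2| ^ p) (π.prod π)) :
    ∫ z, avgDist n p z.1 z.2 ^ p ∂(dmCoupling n dX dY π) =
      ∫ w, |dX w.1.1 w.2.1 - dY w.1.2 w.2.2| ^ p ∂(π.prod π) := by
  have hpair (ij : PairIdx n) : Measurable fun w : Fin n → X × Y => (w ij.1.1, w ij.1.2) :=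
    (measurable_pi_apply _).prodMk (measurable_pi_apply _)
  have hmarg (ij : PairIdx n) :
      (Measure.pi fun _ : Fin n => π).map (fun w => (w ij.1.1, w ij.1.2)) = π.prod π :=
    map_eval_pair_pi π ij.2.ne
  have hdm : Measurable fun w : Fin n → X × Y =>
      (dmMap n dX fun k => (w k).1, dmMap n dY fun k => (w k).2) :=
    ((measurable_dmMap hdX).prodMap (measurable_dmMap hdY)).comp measurable_unzip
  rw [dmCoupling, integral_map hdm.aemeasurable
    ((continuous_avgDist hp).rpow_const fun _ => .inr hp.le).aestronglyMeasurable]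
  simp only [avgDist_rpow hp.ne', dmMap]
  rw [integral_const_mul, integral_finsetSum _ fun ij _ =>
    ((hmarg ij).symm ▸ hint).comp_measurable (hpair ij)]
  have hentry (ij : PairIdx n) :
      ∫ w, |dX (w ij.1.1).1 (w ij.1.2).1 - dY (w ij.1.1).2 (w ij.1.2).2| ^ p
          ∂(Measure.pi fun _ : Fin n => π) =
        ∫ w, |dX w.1.1 w.2.1 - dY w.1.2 w.2.2| ^ p ∂(π.prod π) := by
    rw [← hmarg ij, integral_map (hpair ij).aemeasurable ((hmarg ij).symm ▸ hint.1)]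
  simp only [hentry, Finset.sum_const, Finset.card_univ, card_pairIdx, nsmul_eq_mul]
  rw [← mul_assoc, inv_mul_cancel₀ (cast_choose_two_pos hn).ne', one_mul]

lemma transportCost_dmLaw_le_gwCost (hn : 2 ≤ n) (hp : 0 < p) [IsProbabilityMeasure μ]
    [IsProbabilityMeasure ν] (hdX : Measurable (Function.uncurry dX))
    (hdY : Measurable (Function.uncurry dY))
    (hint : ∀ π ∈ couplings μ ν,
      Integrable (fun w => |dX w.1.1 w.2.1 - dY w.1.2 w.2.2| ^ p) (π.prod π)) :
    transportCost p (avgDist n p) (dmLaw n dX μ) (dmLaw n dY ν) ≤ gwCost p dX dY μ ν := by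
  refine le_csInf ⟨_, μ.prod ν, prod_mem_couplings, rfl⟩ ?_
  rintro _ ⟨π, hπ, rfl⟩
  have := isProbabilityMeasure_of_mem_couplings hπ
  rw [← integral_avgDist_rpow_dmCoupling hn hp hdX hdY (hint π hπ)]
  exact transportCost_le_integral avgDist_nonneg (dmCoupling_mem_couplings hdX hdY hπ)

lemma integrable_gw_integrand (hp : 0 ≤ p) (hdX : Measurable (Function.uncurry dX))
    (hdY : Measurable (Function.uncurry dY)) {CX CY : ℝ} (hX : ∀ x x', |dX x x'| ≤ CX)
    (hY : ∀ y y', |dY y y'| ≤ CY) (π : Measure (X × Y)) [IsFiniteMeasure π] :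
    Integrable (fun w => |dX w.1.1 w.2.1 - dY w.1.2 w.2.2| ^ p) (π.prod π) := by
  refine .of_bound ?_ ((CX + CY) ^ p) (ae_of_all _ fun w => ?_)
  · exact ((hdX.comp (measurable_fst.fst.prodMk measurable_snd.fst)).sub
      (hdY.comp (measurable_fst.snd.prodMk measurable_snd.snd))).abs.pow_const p
      |>.aestronglyMeasurable
  · rw [Real.norm_of_nonneg (by positivity)]
    exact Real.rpow_le_rpow (abs_nonneg _)
      ((abs_sub _ _).trans (add_le_add (hX _ _) (hY _ _))) hp

theorem DMW_le_GW (hn : 2 ≤ n) (hp : 0 < p) [IsProbabilityMeasure μ] [IsProbabilityMeasure ν]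
    (hdX : Measurable (Function.uncurry dX)) (hdY : Measurable (Function.uncurry dY))
    {CX CY : ℝ} (hX : ∀ x x', |dX x x'| ≤ CX) (hY : ∀ y y', |dY y y'| ≤ CY) :
    DMW n p dX dY μ ν ≤ GW p dX dY μ ν := by
  rw [DMW, Wp_eq_transportCost_rpow, GW_eq_gwCost_rpow]
  refine Real.rpow_le_rpow (transportCost_nonneg avgDist_nonneg) ?_ (by positivity)
  refine transportCost_dmLaw_le_gwCost hn hp hdX hdY fun π hπ => ?_
  have := isProbabilityMeasure_of_mem_couplings hπ
  exact integrable_gw_integrand hp.le hdX hdY hX hY π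

lemma continuous_proj (θ : PairIdx n → ℝ) : Continuous (proj n θ) :=
  continuous_finsetSum _ fun ij _ => continuous_const.mul (continuous_apply ij)

lemma transportCost_map_proj_le (hn : 2 ≤ n) (hp : 1 ≤ p) {θ : PairIdx n → ℝ}
    (hθ : dualNorm n p θ ≤ 1) {ρ ρ' : Measure (PairIdx n → ℝ)} (hne : (couplings ρ ρ').Nonempty)
    (hint : ∀ γ ∈ couplings ρ ρ', Integrable (fun z => avgDist n p z.1 z.2 ^ p) γ) :
    transportCost p (fun s t : ℝ => |s - t|) (ρ.map (proj n θ)) (ρ'.map (proj n θ)) ≤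
      transportCost p (avgDist n p) ρ ρ' :=
  transportCost_map_le (continuous_proj θ).measurable (fun _ _ => abs_nonneg _)
    (continuous_fst.sub continuous_snd).abs.measurable (by linarith)
    (fun a b => (abs_proj_sub_proj_le_dualNorm_mul_avgDist hn hp θ a b).trans
      (mul_le_of_le_one_left (avgDist_nonneg a b) hθ))
    hne hint

theorem SDMW_le_DMW (hn : 2 ≤ n) (hp : 1 ≤ p) {σ : Measure (PairIdx n → ℝ)}
    [IsProbabilityMeasure σ] (hσ : ∀ᵐ θ ∂σ, dualNorm n p θ ≤ 1) [IsProbabilityMeasure μ]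
    [IsProbabilityMeasure ν] (hdX : Measurable (Function.uncurry dX))
    (hdY : Measurable (Function.uncurry dY)) {CX CY : ℝ} (hX : ∀ x x', |dX x x'| ≤ CX)
    (hY : ∀ y y', |dY y y'| ≤ CY) :
    SDMW n p σ dX dY μ ν ≤ DMW n p dX dY μ ν := by
  have hp₀ : 0 < p := by linarith
  have := isProbabilityMeasure_dmLaw (n := n) (μ := μ) hdX
  have := isProbabilityMeasure_dmLaw (n := n) (μ := ν) hdY
  have hWp_nonneg (θ : PairIdx n → ℝ) :
      0 ≤ Wp p (fun s t : ℝ => |s - t|) ((dmLaw n dX μ).map (proj n θ))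
        ((dmLaw n dY ν).map (proj n θ)) ^ p :=
    Real.rpow_nonneg (Real.rpow_nonneg (transportCost_nonneg fun _ _ => abs_nonneg _) _) _
  have hsliced : ∀ᵐ θ ∂σ, Wp p (fun s t : ℝ => |s - t|) ((dmLaw n dX μ).map (proj n θ))
      ((dmLaw n dY ν).map (proj n θ)) ^ p ≤
        transportCost p (avgDist n p) (dmLaw n dX μ) (dmLaw n dY ν) :=
    hσ.mono fun θ hθ => by
      rw [Wp_rpow (fun _ _ => abs_nonneg _) hp₀]
      exact transportCost_map_proj_le hn hp hθ ⟨_, prod_mem_couplings⟩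
        fun γ hγ => integrable_avgDist_rpow_of_mem_couplings hp₀ hdX hdY hX hY hγ
  rw [SDMW, DMW, Wp_eq_transportCost_rpow]
  refine Real.rpow_le_rpow (integral_nonneg hWp_nonneg) ?_ (by positivity)
  calc _ ≤ ∫ _, transportCost p (avgDist n p) (dmLaw n dX μ) (dmLaw n dY ν) ∂σ :=
        integral_mono_of_nonneg (ae_of_all _ hWp_nonneg) (integrable_const _) hsliced
    _ = _ := by simp

end DistanceMatrixLaws

lemma abs_dist_le_diam_univ {Z : Type*} [PseudoMetricSpace Z] [CompactSpace Z] (z z' : Z) :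
    |dist z z'| ≤ Metric.diam (Set.univ : Set Z) :=
  (abs_of_nonneg dist_nonneg).trans_le
    (Metric.dist_le_diam_of_mem isCompact_univ.isBounded trivial trivial)

/-- **Sliced lower hierarchy.**
For any probability distribution `σ` on the dual unit set `Θ_{n,p}`,
`SDMW_{n,p}(𝒳,𝒴) ≤ DMW_{n,p}(𝒳,𝒴) ≤ GW_p(𝒳,𝒴)`. -/
theorem sliced_lower_hierarchy {X Y : Type*}
    [MetricSpace X] [CompactSpace X] [MeasurableSpace X] [BorelSpace X]
    [MetricSpace Y] [CompactSpace Y] [MeasurableSpace Y] [BorelSpace Y]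
    (μ : Measure X) (ν : Measure Y) [IsProbabilityMeasure μ] [IsProbabilityMeasure ν]
    (n : ℕ) (hn : 2 ≤ n) (p : ℝ) (hp : 1 ≤ p)
    (σ : Measure (PairIdx n → ℝ)) [IsProbabilityMeasure σ]
    (hσ : ∀ᵐ θ ∂σ, dualNorm n p θ ≤ 1) :
    SDMW n p σ dist dist μ ν ≤ DMW n p dist dist μ ν ∧
    DMW n p dist dist μ ν ≤ GW p dist dist μ ν :=
  ⟨SDMW_le_DMW hn hp hσ continuous_dist.measurable continuous_dist.measurable
    abs_dist_le_diam_univ abs_dist_le_diam_univ,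
    DMW_le_GW hn (by linarith) continuous_dist.measurable continuous_dist.measurable
      abs_dist_le_diam_univ abs_dist_le_diam_univ⟩
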